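/- Let a ∈ F_q be such that both 2a + 2 and 2a - 2 are squares in F_q. Then for every k ≥ 0, the element b = C_k(a) (the evaluation at a of the image in F_q[x] of the k-th Chebyshev polynomial) also satisfies that 2b + 2 and 2b - 2 are squares in F_q. -/

import Mathlib

/-!
Writing `2a + 2 = s²` and `2a - 2 = t²`, the elements `v = (s + t)/2` and `w = (s - t)/2`
satisfy `vw = 1` and `v² + w² = 2a`. Since `2 C_k((x + y)/2) = x^k + y^k` whenever `xy = 1`
(an identity of Dickson polynomials), this gives `2 C_k(a) = v^{2k} + w^{2k}`,
hence `2 C_k(a) ± 2 = (v^k ± w^k)²`.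
-/

noncomputable def cheb : ℕ → Polynomial ℤ
  | 0 => 1
  | 1 => Polynomial.X
  | (k + 2) => 2 * Polynomial.X * cheb (k + 1) - cheb k

open Polynomial

theorem cheb_eq_chebyshev_T (k : ℕ) : cheb k = Chebyshev.T ℤ k := by
  induction k using Nat.twoStepInduction with
  | zero => simp [cheb]
  | one => simp [cheb]
  | more n ih ih' =>
    rw [cheb, ih, ih', show ((n + 2 : ℕ) : ℤ) = n + 2 by push_cast; ring,
      Chebyshev.T_add_two]
    push_cast
    ring_nf

theorem Polynomial.Chebyshev.two_mul_T_eval_of_mul_eq_one {R : Type*} [CommRing R]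
    {a x y : R} (hxy : x * y = 1) (ha : 2 * a = x + y) (n : ℕ) :
    2 * (T R n).eval a = x ^ n + y ^ n := by
  rw [← dickson_one_one_eval_add_inv x y hxy, dickson_one_one_eq_chebyshev_C, ← ha]
  simpa using congrArg (eval a) (C_comp_two_mul_X R n).symm

theorem Polynomial.Chebyshev.isSquare_two_mul_T_eval_add_two_and_sub_two {R : Type*}
    [CommRing R] {a v w : R} (hvw : v * w = 1) (ha : 2 * a = v ^ 2 + w ^ 2) (n : ℕ) :
    IsSquare (2 * (T R n).eval a + 2) ∧ IsSquare (2 * (T R n).eval a - 2) := by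
  have hT := two_mul_T_eval_of_mul_eq_one (x := v ^ 2) (y := w ^ 2)
    (by rw [← mul_pow, hvw, one_pow]) ha n
  have hvwn : v ^ n * w ^ n = 1 := by rw [← mul_pow, hvw, one_pow]
  refine ⟨⟨v ^ n + w ^ n, ?_⟩, ⟨v ^ n - w ^ n, ?_⟩⟩
  · linear_combination hT - 2 * hvwn
  · linear_combination hT + 2 * hvwn

theorem exists_mul_eq_one_sq_add_sq_eq_of_isSquare {F : Type*} [Field F] (h2 : (2 : F) ≠ 0)
    {a : F} (hplus : IsSquare (2 * a + 2)) (hminus : IsSquare (2 * a - 2)) :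
    ∃ v w : F, v * w = 1 ∧ 2 * a = v ^ 2 + w ^ 2 := by
  obtain ⟨s, hs⟩ := hplus
  obtain ⟨t, ht⟩ := hminus
  refine ⟨(s + t) / 2, (s - t) / 2, ?_, ?_⟩
  · field_simp
    linear_combination ht - hs
  · field_simp
    linear_combination 2 * hs + 2 * ht

theorem FiniteField.two_ne_zero_of_odd_card {F : Type*} [Field F] [Fintype F]
    (hq : Odd (Fintype.card F)) : (2 : F) ≠ 0 := by
  refine Ring.two_ne_zero fun hchar => ?_
  have := FiniteField.even_card_of_char_two hchar
  rw [Nat.odd_iff] at hq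
  omega

/-- If `a ∈ F_q` is such that `2a + 2` and `2a - 2` are both squares in
`F_q`, then for every `k ≥ 0` the element `b = C_k(a)` also satisfies that `2b + 2` and
`2b - 2` are squares in `F_q`. -/
theorem chebyshev_preserves {F : Type*} [Field F] [Fintype F]
    (hq : Odd (Fintype.card F)) (a : F)
    (h1 : IsSquare (2 * a + 2)) (h2 : IsSquare (2 * a - 2)) (k : ℕ) :
    IsSquare (2 * Polynomial.eval a ((cheb k).map (Int.castRingHom F)) + 2) ∧
      IsSquare (2 * Polynomial.eval a ((cheb k).map (Int.castRingHom F)) - 2) := by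
  obtain ⟨v, w, hvw, ha⟩ := exists_mul_eq_one_sq_add_sq_eq_of_isSquare
    (FiniteField.two_ne_zero_of_odd_card hq) h1 h2
  rw [cheb_eq_chebyshev_T, Chebyshev.map_T]
  exact Chebyshev.isSquare_two_mul_T_eval_add_two_and_sub_two hvw ha k
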